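/- If T is a tree of order n ≥ 4, then √((n−1)² + 1) ≤ cDSO(T) ≤ √5 + (n−3)√2, with left equality if and only if T ≅ S_n and right equality if and only if T ≅ P_n. -/

import Mathlib

open SimpleGraph Finset Real

noncomputable def HSO {V : Type*} [Fintype V] (G : SimpleGraph V) : ℝ :=
  letI := Classical.decRel G.Adj
  ∑ e ∈ G.edgeFinset, Sym2.lift
    ⟨fun x y => Real.sqrt ((G.degree x : ℝ) ^ 2 + (G.degree y : ℝ) ^ 2) /
      min (G.degree x : ℝ) (G.degree y : ℝ),
     fun x y => by simp [add_comm, min_comm]⟩ e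

noncomputable def SO {V : Type*} [Fintype V] (G : SimpleGraph V) : ℝ :=
  letI := Classical.decRel G.Adj
  ∑ e ∈ G.edgeFinset, Sym2.lift
    ⟨fun x y => Real.sqrt ((G.degree x : ℝ) ^ 2 + (G.degree y : ℝ) ^ 2),
     fun x y => by simp [add_comm]⟩ e

noncomputable def cDSO {V : Type*} [Fintype V] (G : SimpleGraph V) : ℝ :=
  letI := Classical.decRel G.Adj
  ∑ e ∈ G.edgeFinset, Sym2.lift
    ⟨fun x y => Real.sqrt ((G.degree x : ℝ) ^ 2 + (G.degree y : ℝ) ^ 2) /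
      max (G.degree x : ℝ) (G.degree y : ℝ),
     fun x y => by simp [add_comm, max_comm]⟩ e

noncomputable def M1 {V : Type*} [Fintype V] (G : SimpleGraph V) : ℝ :=
  letI := Classical.decRel G.Adj
  ∑ e ∈ G.edgeFinset, Sym2.lift
    ⟨fun x y => (G.degree x : ℝ) + (G.degree y : ℝ),
     fun x y => by simp [add_comm]⟩ e

def IsRegularGraph {V : Type*} [Fintype V] (G : SimpleGraph V) : Prop :=
  letI := Classical.decRel G.Adj
  ∃ k, G.IsRegularOfDegree k

def addEdge {V : Type*} (G : SimpleGraph V) (u v : V) : SimpleGraph V :=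
  G ⊔ SimpleGraph.fromEdgeSet {s(u, v)}

/-!
Writing `r = min (d x) (d y) / max (d x) (d y)`, the weight of an edge `xy` is `√(1 + r ^ 2)`,
strictly increasing in `r`.

In a tree on `n` vertices all degrees lie in `[1, n - 1]`, so `r ≥ 1 / (n - 1)` on each of the
`n - 1` edges, with equality exactly on edges from a leaf to a vertex of degree `n - 1`; such a
vertex is adjacent to everything, and the tree is the star.

For the upper bound, `r ≤ 1` on every edge, with equality iff the end degrees agree. A tree has two
leaves `u ≠ v`, and for `n ≥ 3` the neighbour of a leaf is not a leaf, so `r ≤ 1 / 2` on the two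
pendant edges at `u` and `v`. In the equality case every further leaf `w` would lie on an edge
with equal end degrees, i.e. next to another leaf; hence all vertices other than `u, v` have
degree at least 2, and the handshake lemma makes them exactly 2. A connected graph with this
degree sequence is the path between its two leaves.
-/

noncomputable def cdsoWeight (a b : ℝ) : ℝ := √(a ^ 2 + b ^ 2) / max a b

lemma cdsoWeight_comm (a b : ℝ) : cdsoWeight a b = cdsoWeight b a := by
  rw [cdsoWeight, cdsoWeight, add_comm, max_comm]

lemma cdsoWeight_eq_sqrt_one_add_sq {a b : ℝ} (ha : 0 < a) (hb : 0 < b) :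
    cdsoWeight a b = √(1 + (min a b / max a b) ^ 2) := by
  wlog hab : a ≤ b generalizing a b
  · rw [cdsoWeight_comm, this hb ha (by linarith), min_comm, max_comm]
  rw [cdsoWeight, min_eq_left hab, max_eq_right hab, eq_comm, ← Real.sqrt_sq hb.le,
    ← Real.sqrt_div' _ (by positivity), Real.sqrt_sq hb.le]
  congr 1
  field_simp
  ring

lemma strictMonoOn_sqrt_one_add_sq : StrictMonoOn (fun s : ℝ ↦ √(1 + s ^ 2)) (Set.Ici 0) :=
  fun _ hs _ _ hst ↦ Real.sqrt_lt_sqrt (by positivity) (by gcongr)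

lemma min_div_max_nonneg {a b : ℝ} (ha : 0 < a) (hb : 0 < b) : 0 ≤ min a b / max a b := by
  positivity

lemma cdsoWeight_le_cdsoWeight_iff {a b c d : ℝ} (ha : 0 < a) (hb : 0 < b) (hc : 0 < c)
    (hd : 0 < d) :
    cdsoWeight a b ≤ cdsoWeight c d ↔ min a b / max a b ≤ min c d / max c d := by
  rw [cdsoWeight_eq_sqrt_one_add_sq ha hb, cdsoWeight_eq_sqrt_one_add_sq hc hd]
  exact strictMonoOn_sqrt_one_add_sq.le_iff_le (min_div_max_nonneg ha hb)
    (min_div_max_nonneg hc hd)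

lemma cdsoWeight_inj {a b c d : ℝ} (ha : 0 < a) (hb : 0 < b) (hc : 0 < c) (hd : 0 < d) :
    cdsoWeight a b = cdsoWeight c d ↔ min a b / max a b = min c d / max c d := by
  rw [cdsoWeight_eq_sqrt_one_add_sq ha hb, cdsoWeight_eq_sqrt_one_add_sq hc hd]
  exact strictMonoOn_sqrt_one_add_sq.injOn.eq_iff (min_div_max_nonneg ha hb)
    (min_div_max_nonneg hc hd)

lemma cdsoWeight_one_le_cdsoWeight {a b N : ℝ} (ha : 1 ≤ a) (hb : 1 ≤ b) (haN : a ≤ N)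
    (hbN : b ≤ N) : cdsoWeight 1 N ≤ cdsoWeight a b := by
  rw [cdsoWeight_le_cdsoWeight_iff one_pos (by linarith) (by linarith) (by linarith),
    min_eq_left (by linarith), max_eq_right (by linarith),
    div_le_div_iff₀ (by linarith) (lt_of_lt_of_le one_pos (le_max_of_le_left ha))]
  nlinarith [le_min ha hb, max_le haN hbN]

lemma cdsoWeight_eq_cdsoWeight_one_iff {a b N : ℝ} (ha : 1 ≤ a) (hb : 1 ≤ b) (haN : a ≤ N)
    (hbN : b ≤ N) : cdsoWeight a b = cdsoWeight 1 N ↔ min a b = 1 ∧ max a b = N := by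
  have hmax : 0 < max a b := lt_of_lt_of_le one_pos (le_max_of_le_left ha)
  rw [cdsoWeight_inj (by linarith) (by linarith) one_pos (by linarith),
    min_eq_left (by linarith : (1 : ℝ) ≤ N), max_eq_right (by linarith : (1 : ℝ) ≤ N),
    div_eq_div_iff hmax.ne' (by linarith)]
  constructor
  · intro h
    have := le_min ha hb
    have := max_le haN hbN
    constructor <;> nlinarith
  · rintro ⟨h1, h2⟩
    rw [h1, h2]

lemma cdsoWeight_le_cdsoWeight_one_one {a b : ℝ} (ha : 0 < a) (hb : 0 < b) :
    cdsoWeight a b ≤ cdsoWeight 1 1 := by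
  rw [cdsoWeight_le_cdsoWeight_iff ha hb one_pos one_pos, min_self, max_self, div_one,
    div_le_one (lt_max_of_lt_left ha)]
  exact min_le_max

lemma cdsoWeight_eq_cdsoWeight_one_one_iff {a b : ℝ} (ha : 0 < a) (hb : 0 < b) :
    cdsoWeight a b = cdsoWeight 1 1 ↔ a = b := by
  rw [cdsoWeight_inj ha hb one_pos one_pos, min_self, max_self, div_one,
    div_eq_one_iff_eq (lt_max_of_lt_left ha).ne']
  constructor
  · intro h
    linarith [min_le_left a b, min_le_right a b, le_max_left a b, le_max_right a b]
  · rintro rfl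
    rw [min_self, max_self]

lemma cdsoWeight_one_le_cdsoWeight_one_two {b : ℝ} (hb : 2 ≤ b) :
    cdsoWeight 1 b ≤ cdsoWeight 1 2 := by
  rw [cdsoWeight_le_cdsoWeight_iff one_pos (by linarith) one_pos two_pos,
    min_eq_left (by linarith), max_eq_right (by linarith), min_eq_left one_le_two,
    max_eq_right one_le_two]
  gcongr

lemma cdsoWeight_one_eq_cdsoWeight_one_two_iff {b : ℝ} (hb : 2 ≤ b) :
    cdsoWeight 1 b = cdsoWeight 1 2 ↔ b = 2 := by
  rw [cdsoWeight_inj one_pos (by linarith) one_pos two_pos,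
    min_eq_left (by linarith), max_eq_right (by linarith), min_eq_left one_le_two,
    max_eq_right one_le_two, one_div, one_div, inv_inj]

lemma cdsoWeight_one_one : cdsoWeight 1 1 = √2 := by
  norm_num [cdsoWeight]

lemma cdsoWeight_one_two : cdsoWeight 1 2 = √5 / 2 := by
  norm_num [cdsoWeight]

lemma mul_cdsoWeight_one {N : ℝ} (hN : 1 ≤ N) : N * cdsoWeight 1 N = √(N ^ 2 + 1) := by
  rw [cdsoWeight, max_eq_right hN, one_pow, add_comm]
  field_simp

namespace SimpleGraph

variable {V W : Type*}

lemma Preconnected.eq_univ_of_forall_adj_mem {G : SimpleGraph V} (hG : G.Preconnected)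
    {s : Set V} {x : V} (hx : x ∈ s) (hs : ∀ y ∈ s, ∀ z, G.Adj y z → z ∈ s) :
    s = Set.univ := by
  refine Set.eq_univ_of_forall fun y ↦ by_contra fun hy ↦ ?_
  obtain ⟨d, -, hd, hd'⟩ := (hG x y).some.exists_boundary_dart s hx hy
  exact hd' (hs _ hd _ d.adj)

lemma Iso.isUniversal_symm_apply {G : SimpleGraph V} {H : SimpleGraph W} (f : G ≃g H) {r : W}
    (hr : H.IsUniversal r) : G.IsUniversal (f.symm r) := fun w hw ↦ by
  have hne : r ≠ f w := fun h ↦ hw (by rw [h, f.symm_apply_apply])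
  simpa using f.symm.map_adj_iff.mpr (hr hne)

def starGraphCongr (e : V ≃ W) (r : V) : starGraph r ≃g starGraph (e r) :=
  ⟨e, by simp⟩

lemma nonempty_starGraph_iso [Fintype V] [Fintype W] (h : Fintype.card V = Fintype.card W)
    (r : V) (r' : W) : Nonempty (starGraph r ≃g starGraph r') := by
  classical
  let e := (Fintype.equivOfCardEq h).trans (Equiv.swap (Fintype.equivOfCardEq h r) r')
  have he : e r = r' := by simp [e]
  exact he ▸ ⟨starGraphCongr e r⟩

lemma completeBipartiteGraph_fin_one_eq_starGraph (β : Type*) :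
    completeBipartiteGraph (Fin 1) β = starGraph (Sum.inl 0) := by
  ext (a | b) (a' | b') <;> simp [Fin.fin_one_eq_zero]

instance (n : ℕ) : DecidableRel (pathGraph n).Adj := fun _ _ ↦ decidable_of_iff' _ pathGraph_adj

lemma degree_pathGraph_eq_one {n : ℕ} (hn : 2 ≤ n) {i : Fin n} (hi : i.val = 0 ∨ i.val = n - 1) :
    (pathGraph n).degree i = 1 := by
  rw [degree_eq_one_iff_existsUnique_adj]
  rcases hi with hi | hi
  · refine ⟨⟨1, by omega⟩, ?_, fun j hj ↦ ?_⟩ <;>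
      simp only [pathGraph_adj, Fin.ext_iff] at * <;> omega
  · refine ⟨⟨n - 2, by omega⟩, ?_, fun j hj ↦ ?_⟩ <;>
      simp only [pathGraph_adj, Fin.ext_iff] at * <;> omega

lemma degree_pathGraph_eq_two {n : ℕ} {i : Fin n} (h₀ : i.val ≠ 0) (h₁ : i.val ≠ n - 1) :
    (pathGraph n).degree i = 2 := by
  have hnbr : (pathGraph n).neighborFinset i = {⟨i - 1, by omega⟩, ⟨i + 1, by omega⟩} := by
    ext j
    simp only [mem_neighborFinset, pathGraph_adj, Finset.mem_insert, Finset.mem_singleton,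
      Fin.ext_iff]
    omega
  rw [← card_neighborFinset_eq_degree, hnbr, Finset.card_pair]
  simp only [ne_eq, Fin.mk.injEq]
  omega

variable [Fintype V] {G : SimpleGraph V} [DecidableRel G.Adj]

lemma ncard_neighborSet (x : V) : (G.neighborSet x).ncard = G.degree x := by
  rw [Set.ncard_eq_toFinset_card', Set.toFinset_card, card_neighborSet_eq_degree]

lemma eq_of_adj_of_degree_eq_one {u x y : V} (hu : G.degree u = 1) (hx : G.Adj u x)
    (hy : G.Adj u y) : x = y :=
  (degree_eq_one_iff_existsUnique_adj.mp hu).unique hx hy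

lemma Preconnected.not_adj_of_degree_eq_one (hG : G.Preconnected) (hV : 3 ≤ Fintype.card V)
    {u v : V} (hu : G.degree u = 1) (hv : G.degree v = 1) : ¬ G.Adj u v := by
  classical
  intro huv
  have hclosed : ∀ y ∈ (({u, v} : Finset V) : Set V), ∀ z, G.Adj y z →
      z ∈ (({u, v} : Finset V) : Set V) := by
    simp only [Finset.coe_insert, Finset.coe_singleton, Set.mem_insert_iff,
      Set.mem_singleton_iff]
    rintro y (rfl | rfl) z hz
    · exact Or.inr (eq_of_adj_of_degree_eq_one hu hz huv)
    · exact Or.inl (eq_of_adj_of_degree_eq_one hv hz huv.symm)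
  have huniv := Finset.coe_eq_univ.mp (hG.eq_univ_of_forall_adj_mem (x := u) (by simp) hclosed)
  have := Finset.card_le_two (a := u) (b := v)
  rw [huniv, Finset.card_univ] at this
  omega

lemma Preconnected.two_le_degree_of_adj (hG : G.Preconnected) (hV : 3 ≤ Fintype.card V)
    {u x : V} (hu : G.degree u = 1) (hx : G.Adj u x) : 2 ≤ G.degree x := by
  have : Nontrivial V := Fintype.one_lt_card_iff_nontrivial.mp (by omega)
  have h0 := hG.degree_pos_of_nontrivial x
  have h1 : G.degree x ≠ 1 := fun h ↦ hG.not_adj_of_degree_eq_one hV hu h hx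
  omega

lemma one_le_cast_degree [Nontrivial V] (hG : G.Preconnected) (x : V) :
    (1 : ℝ) ≤ G.degree x := by
  exact_mod_cast hG.degree_pos_of_nontrivial x

lemma cast_degree_pos_of_adj {x y : V} (h : G.Adj x y) : (0 : ℝ) < G.degree x := by
  exact_mod_cast (G.degree_pos_iff_exists_adj x).mpr ⟨y, h⟩

lemma cast_degree_le (x : V) : (G.degree x : ℝ) ≤ Fintype.card V - 1 := by
  rw [le_sub_iff_add_le]
  exact_mod_cast G.degree_lt_card_verts x

lemma cast_degree_eq_iff_isUniversal {c : V} :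
    (G.degree c : ℝ) = Fintype.card V - 1 ↔ G.IsUniversal c := by
  rw [← degree_eq_card_sub_one, ← Nat.cast_pred (Fintype.card_pos_iff.mpr ⟨c⟩), Nat.cast_inj]

lemma IsTree.cast_card_edgeFinset (hG : G.IsTree) :
    (#G.edgeFinset : ℝ) = Fintype.card V - 1 := by
  rw [← hG.card_edgeFinset]
  push_cast
  ring

lemma IsTree.eq_or_eq_of_isUniversal (hG : G.IsTree) {c x y : V} (hc : G.IsUniversal c)
    (h : G.Adj x y) : x = c ∨ y = c := by
  classical
  have hinc : G.incidenceFinset c = G.edgeFinset := by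
    refine Finset.eq_of_subset_of_card_le (G.incidenceFinset_subset c) ?_
    rw [card_incidenceFinset_eq_degree, (degree_eq_card_sub_one G c).mpr hc]
    have := hG.card_edgeFinset
    omega
  have hmem : s(x, y) ∈ G.incidenceFinset c := hinc ▸ mem_edgeFinset.mpr h
  rw [mem_incidenceFinset, incidenceSet, Set.mem_ofPred_eq, Sym2.mem_iff] at hmem
  exact hmem.2.imp Eq.symm Eq.symm

lemma IsTree.degree_eq_one_of_isUniversal (hG : G.IsTree) {c x : V} (hc : G.IsUniversal c)
    (hx : x ≠ c) : G.degree x = 1 :=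
  degree_eq_one_iff_existsUnique_adj.mpr
    ⟨c, (hc (Ne.symm hx)).symm, fun _ hy ↦ (hG.eq_or_eq_of_isUniversal hc hy).resolve_left hx⟩

lemma IsTree.eq_starGraph (hG : G.IsTree) {c : V} (hc : G.IsUniversal c) : G = starGraph c := by
  ext x y
  rw [starGraph_adj]
  refine ⟨fun h ↦ ⟨h.ne, hG.eq_or_eq_of_isUniversal hc h⟩, ?_⟩
  rintro ⟨hxy, rfl | rfl⟩
  · exact hc hxy
  · exact (hc hxy.symm).symm

lemma IsTree.exists_isUniversal_iff (hG : G.IsTree) : (∃ c, G.IsUniversal c) ↔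
    Nonempty (G ≃g completeBipartiteGraph (Fin 1) (Fin (Fintype.card V - 1))) := by
  rw [completeBipartiteGraph_fin_one_eq_starGraph]
  constructor
  · rintro ⟨c, hc⟩
    rw [hG.eq_starGraph hc]
    have : 0 < Fintype.card V := Fintype.card_pos_iff.mpr hG.connected.nonempty
    exact nonempty_starGraph_iso (by simp; omega) _ _
  · rintro ⟨f⟩
    exact ⟨_, f.isUniversal_symm_apply isUniversal_starGraph_self⟩

lemma IsTree.degree_eq_two_of_two_le (hG : G.IsTree) {u v : V} (huv : u ≠ v)
    (hu : G.degree u = 1) (hv : G.degree v = 1) (h : ∀ w, w ≠ u → w ≠ v → 2 ≤ G.degree w)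
    {w : V} (hwu : w ≠ u) (hwv : w ≠ v) : G.degree w = 2 := by
  classical
  have hle : ∀ x ∈ univ \ {u, v}, 2 ≤ G.degree x := by
    simp only [Finset.mem_sdiff, Finset.mem_univ, Finset.mem_insert, Finset.mem_singleton,
      true_and, not_or, and_imp]
    exact h
  have hsum : ∑ x ∈ univ \ {u, v}, 2 = ∑ x ∈ univ \ {u, v}, G.degree x := by
    have hsplit := Finset.sum_sdiff (f := fun x ↦ G.degree x) (Finset.subset_univ {u, v})
    rw [Finset.sum_pair huv, hu, hv, G.sum_degrees_eq_twice_card_edges] at hsplit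
    rw [Finset.sum_const, Finset.card_sdiff_of_subset (Finset.subset_univ _), Finset.card_univ,
      Finset.card_pair huv, smul_eq_mul]
    have := hG.card_edgeFinset
    omega
  exact ((Finset.sum_eq_sum_iff_of_le hle).mp hsum w (by simp [hwu, hwv])).symm

lemma Iso.exists_degree_eq_of_pathGraph (f : G ≃g pathGraph (Fintype.card V))
    (hV : 2 ≤ Fintype.card V) :
    ∃ u v, u ≠ v ∧ G.degree u = 1 ∧ G.degree v = 1 ∧
      ∀ w, w ≠ u → w ≠ v → G.degree w = 2 := by
  set n := Fintype.card V
  have hdeg (i) : G.degree (f.symm i) = (pathGraph n).degree i := f.symm.degree_eq i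
  refine ⟨f.symm ⟨0, by omega⟩, f.symm ⟨n - 1, by omega⟩, by simp; omega,
    by rw [hdeg, degree_pathGraph_eq_one hV (Or.inl rfl)],
    by rw [hdeg, degree_pathGraph_eq_one hV (Or.inr rfl)], fun w hu hv ↦ ?_⟩
  have hw {i : Fin n} (h : (f w).val = i.val) : w = f.symm i := by
    rw [← Fin.ext h, f.symm_apply_apply]
  rw [← f.symm_apply_apply w, hdeg]
  exact degree_pathGraph_eq_two (fun h ↦ hu (hw h)) (fun h ↦ hv (hw h))

lemma Walk.IsPath.neighborSet_toSubgraph_eq {u v : V} {p : G.Walk u v} (hp : p.IsPath)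
    (huv : u ≠ v) (hu : G.degree u = 1) (hv : G.degree v = 1)
    (hdeg : ∀ w, w ≠ u → w ≠ v → G.degree w = 2) {x : V} (hx : x ∈ p.support) :
    p.toSubgraph.neighborSet x = G.neighborSet x := by
  refine Set.eq_of_subset_of_ncard_le (p.toSubgraph.neighborSet_subset x) ?_
  have hnil : ¬ p.Nil := Walk.not_nil_of_ne huv
  rw [ncard_neighborSet]
  obtain ⟨i, rfl, hi⟩ := Walk.mem_support_iff_exists_getVert.mp hx
  rcases Nat.eq_zero_or_pos i with rfl | hi₀
  · rw [Walk.getVert_zero, hp.neighborSet_toSubgraph_startpoint hnil, Set.ncard_singleton, hu]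
  rcases hi.eq_or_lt with rfl | hil
  · rw [Walk.getVert_length, hp.neighborSet_toSubgraph_endpoint hnil, Set.ncard_singleton, hv]
  have hne (j : ℕ) (hj : j ≤ p.length) (hij : i ≠ j) : p.getVert i ≠ p.getVert j :=
    fun h ↦ hij (hp.getVert_injOn (by rw [Set.mem_ofPred_eq]; omega)
      (by rw [Set.mem_ofPred_eq]; omega) h)
  rw [hp.ncard_neighborSet_toSubgraph_internal_eq_two hi₀.ne' hil,
    hdeg _ (by simpa using hne 0 (by omega) hi₀.ne')
      (by simpa using hne p.length le_rfl hil.ne)]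

lemma Connected.nonempty_iso_pathGraph (hG : G.Connected) {u v : V} (huv : u ≠ v)
    (hu : G.degree u = 1) (hv : G.degree v = 1) (hdeg : ∀ w, w ≠ u → w ≠ v → G.degree w = 2) :
    Nonempty (G ≃g pathGraph (Fintype.card V)) := by
  classical
  obtain ⟨p, hp⟩ := hG.preconnected.exists_isPath u v
  -- by the degree count, `p` already uses every edge at each of its vertices
  have hadj {x y : V} (hx : x ∈ p.toSubgraph.verts) : p.toSubgraph.Adj x y ↔ G.Adj x y := by
    rw [← Subgraph.mem_neighborSet, hp.neighborSet_toSubgraph_eq huv hu hv hdeg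
      (p.mem_verts_toSubgraph.mp hx), mem_neighborSet]
  have hverts : p.toSubgraph.verts = Set.univ :=
    hG.preconnected.eq_univ_of_forall_adj_mem p.start_mem_verts_toSubgraph
      fun x hx y hxy ↦ p.toSubgraph.edge_vert ((hadj hx).mpr hxy).symm
  have htop : p.toSubgraph = ⊤ := by
    ext x y
    · rw [hverts, Subgraph.verts_top]
    · simpa using hadj (hverts ▸ Set.mem_univ x)
  have e := hp.pathGraphIsoToSubgraph
  rw [htop] at e
  have hcard : Fintype.card V = p.length + 1 := by
    simpa using (Fintype.card_congr (e.trans Subgraph.topIso).toEquiv).symm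
  exact hcard ▸ ⟨(e.trans Subgraph.topIso).symm⟩

theorem Connected.nonempty_iso_pathGraph_iff (hG : G.Connected) (hV : 2 ≤ Fintype.card V) :
    Nonempty (G ≃g pathGraph (Fintype.card V)) ↔ ∃ u v, u ≠ v ∧ G.degree u = 1 ∧
      G.degree v = 1 ∧ ∀ w, w ≠ u → w ≠ v → G.degree w = 2 :=
  ⟨fun ⟨f⟩ ↦ f.exists_degree_eq_of_pathGraph hV,
    fun ⟨_, _, huv, hu, hv, hdeg⟩ ↦ hG.nonempty_iso_pathGraph huv hu hv hdeg⟩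

variable (G) in
noncomputable def cdsoEdgeWeight : Sym2 V → ℝ :=
  Sym2.lift ⟨fun x y ↦ cdsoWeight (G.degree x) (G.degree y), fun _ _ ↦ cdsoWeight_comm _ _⟩

@[simp]
lemma cdsoEdgeWeight_mk (x y : V) :
    G.cdsoEdgeWeight s(x, y) = cdsoWeight (G.degree x) (G.degree y) :=
  rfl

variable (G) in
lemma cDSO_eq_sum_cdsoEdgeWeight : cDSO G = ∑ e ∈ G.edgeFinset, G.cdsoEdgeWeight e := by
  unfold cDSO
  refine Finset.sum_congr (by congr!) fun e _ ↦ ?_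
  induction e using Sym2.ind
  simp only [cdsoEdgeWeight, cdsoWeight, Sym2.lift_mk]
  congr!

lemma forall_mem_edgeFinset_iff {p : Sym2 V → Prop} :
    (∀ e ∈ G.edgeFinset, p e) ↔ ∀ x y, G.Adj x y → p s(x, y) := by
  simp [Sym2.forall]

lemma IsTree.cdsoWeight_one_le_cdsoEdgeWeight [Nontrivial V] (hG : G.IsTree) :
    ∀ e ∈ G.edgeFinset, cdsoWeight 1 (Fintype.card V - 1) ≤ G.cdsoEdgeWeight e :=
  forall_mem_edgeFinset_iff.mpr fun x y _ ↦ cdsoWeight_one_le_cdsoWeight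
    (one_le_cast_degree hG.preconnected x) (one_le_cast_degree hG.preconnected y)
    (cast_degree_le x) (cast_degree_le y)

lemma IsTree.sum_cdsoWeight_one [Nontrivial V] (hG : G.IsTree) :
    ∑ _e ∈ G.edgeFinset, cdsoWeight 1 (Fintype.card V - 1) =
      √(((Fintype.card V : ℝ) - 1) ^ 2 + 1) := by
  rw [Finset.sum_const, nsmul_eq_mul, hG.cast_card_edgeFinset, mul_cdsoWeight_one]
  have : 1 < Fintype.card V := Fintype.one_lt_card
  rw [le_sub_iff_add_le]
  exact_mod_cast this

theorem IsTree.sqrt_le_cDSO [Nontrivial V] (hG : G.IsTree) :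
    √(((Fintype.card V : ℝ) - 1) ^ 2 + 1) ≤ cDSO G := by
  rw [cDSO_eq_sum_cdsoEdgeWeight, ← hG.sum_cdsoWeight_one]
  exact Finset.sum_le_sum hG.cdsoWeight_one_le_cdsoEdgeWeight

theorem IsTree.cDSO_eq_sqrt_iff [Nontrivial V] (hG : G.IsTree) :
    cDSO G = √(((Fintype.card V : ℝ) - 1) ^ 2 + 1) ↔ ∃ c, G.IsUniversal c := by
  have hconn := hG.preconnected
  rw [cDSO_eq_sum_cdsoEdgeWeight, ← hG.sum_cdsoWeight_one, eq_comm,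
    Finset.sum_eq_sum_iff_of_le hG.cdsoWeight_one_le_cdsoEdgeWeight, forall_mem_edgeFinset_iff]
  constructor
  · intro h
    obtain ⟨x, y, hxy⟩ : ∃ x y, G.Adj x y := by
      obtain ⟨x⟩ := hG.connected.nonempty
      exact ⟨x, (G.degree_pos_iff_exists_adj x).mp (hconn.degree_pos_of_nontrivial x)⟩
    have hmax := ((cdsoWeight_eq_cdsoWeight_one_iff (one_le_cast_degree hconn x)
      (one_le_cast_degree hconn y) (cast_degree_le x) (cast_degree_le y)).mp (h x y hxy).symm).2
    simp only [← cast_degree_eq_iff_isUniversal]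
    rcases max_choice (G.degree x : ℝ) (G.degree y) with h | h
    · exact ⟨x, h ▸ hmax⟩
    · exact ⟨y, h ▸ hmax⟩
  · rintro ⟨c, hc⟩ x y hxy
    have hcN := cast_degree_eq_iff_isUniversal.mpr hc
    rcases hG.eq_or_eq_of_isUniversal hc hxy with rfl | rfl
    · rw [cdsoEdgeWeight_mk, hcN, hG.degree_eq_one_of_isUniversal hc hxy.ne.symm, Nat.cast_one,
        cdsoWeight_comm]
    · rw [cdsoEdgeWeight_mk, hcN, hG.degree_eq_one_of_isUniversal hc hxy.ne, Nat.cast_one]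

lemma cdsoEdgeWeight_le_sqrt_two : ∀ e ∈ G.edgeFinset, G.cdsoEdgeWeight e ≤ √2 :=
  forall_mem_edgeFinset_iff.mpr fun _ _ h ↦ cdsoWeight_one_one ▸
    cdsoWeight_le_cdsoWeight_one_one (cast_degree_pos_of_adj h) (cast_degree_pos_of_adj h.symm)

lemma cdsoEdgeWeight_eq_sqrt_two_iff {x y : V} (h : G.Adj x y) :
    G.cdsoEdgeWeight s(x, y) = √2 ↔ G.degree x = G.degree y := by
  rw [cdsoEdgeWeight_mk, ← cdsoWeight_one_one, cdsoWeight_eq_cdsoWeight_one_one_iff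
    (cast_degree_pos_of_adj h) (cast_degree_pos_of_adj h.symm), Nat.cast_inj]

lemma sum_cdsoEdgeWeight_le {s : Finset (Sym2 V)} (hs : s ⊆ G.edgeFinset) :
    ∑ e ∈ s, G.cdsoEdgeWeight e ≤ #s * √2 := by
  rw [← nsmul_eq_mul]
  exact Finset.sum_le_card_nsmul _ _ _ fun e he ↦ cdsoEdgeWeight_le_sqrt_two e (hs he)

lemma sum_cdsoEdgeWeight_eq_iff {s : Finset (Sym2 V)} (hs : s ⊆ G.edgeFinset) :
    ∑ e ∈ s, G.cdsoEdgeWeight e = #s * √2 ↔ ∀ e ∈ s, G.cdsoEdgeWeight e = √2 := by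
  rw [← nsmul_eq_mul, ← Finset.sum_const]
  exact Finset.sum_eq_sum_iff_of_le fun e he ↦ cdsoEdgeWeight_le_sqrt_two e (hs he)

lemma Preconnected.cdsoEdgeWeight_le_of_degree_eq_one (hG : G.Preconnected)
    (hV : 3 ≤ Fintype.card V) {u x : V} (hu : G.degree u = 1) (h : G.Adj u x) :
    G.cdsoEdgeWeight s(u, x) ≤ √5 / 2 := by
  rw [cdsoEdgeWeight_mk, hu, Nat.cast_one, ← cdsoWeight_one_two]
  exact cdsoWeight_one_le_cdsoWeight_one_two (by exact_mod_cast hG.two_le_degree_of_adj hV hu h)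

lemma Preconnected.cdsoEdgeWeight_eq_iff_of_degree_eq_one (hG : G.Preconnected)
    (hV : 3 ≤ Fintype.card V) {u x : V} (hu : G.degree u = 1) (h : G.Adj u x) :
    G.cdsoEdgeWeight s(u, x) = √5 / 2 ↔ G.degree x = 2 := by
  rw [cdsoEdgeWeight_mk, hu, Nat.cast_one, ← cdsoWeight_one_two,
    cdsoWeight_one_eq_cdsoWeight_one_two_iff (by exact_mod_cast hG.two_le_degree_of_adj hV hu h)]
  exact_mod_cast Iff.rfl

lemma Preconnected.pendant_edges_ne (hG : G.Preconnected) (hV : 3 ≤ Fintype.card V)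
    {u v u' v' : V} (huv : u ≠ v) (hu : G.degree u = 1) (hv : G.degree v = 1)
    (hu' : G.Adj u u') : s(u, u') ≠ s(v, v') := by
  rw [Ne, Sym2.eq_iff]
  rintro (⟨rfl, -⟩ | ⟨rfl, rfl⟩)
  · exact huv rfl
  · exact hG.not_adj_of_degree_eq_one hV hu hv hu'

lemma cDSO_eq_add_add_sum [DecidableEq V] {e₁ e₂ : Sym2 V} (h₁ : e₁ ∈ G.edgeFinset)
    (h₂ : e₂ ∈ G.edgeFinset) (hne : e₁ ≠ e₂) :
    cDSO G = G.cdsoEdgeWeight e₁ + G.cdsoEdgeWeight e₂ +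
      ∑ e ∈ (G.edgeFinset.erase e₁).erase e₂, G.cdsoEdgeWeight e := by
  rw [cDSO_eq_sum_cdsoEdgeWeight, ← Finset.add_sum_erase _ _ h₁,
    ← Finset.add_sum_erase _ _ (Finset.mem_erase.mpr ⟨hne.symm, h₂⟩), add_assoc]

lemma IsTree.cast_card_erase_erase [DecidableEq V] (hG : G.IsTree) {e₁ e₂ : Sym2 V}
    (h₁ : e₁ ∈ G.edgeFinset) (h₂ : e₂ ∈ G.edgeFinset) (hne : e₁ ≠ e₂) :
    (#((G.edgeFinset.erase e₁).erase e₂) : ℝ) = Fintype.card V - 3 := by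
  have h₂' : e₂ ∈ G.edgeFinset.erase e₁ := Finset.mem_erase.mpr ⟨hne.symm, h₂⟩
  have h2 : 2 ≤ #G.edgeFinset := by
    have := Finset.card_pos.mpr ⟨_, h₂'⟩
    rw [Finset.card_erase_of_mem h₁] at this
    omega
  rw [Finset.card_erase_of_mem h₂', Finset.card_erase_of_mem h₁, Nat.sub_sub, Nat.cast_sub h2,
    hG.cast_card_edgeFinset]
  ring

theorem IsTree.cDSO_le_of_degree_eq_one (hG : G.IsTree) (hV : 3 ≤ Fintype.card V) {u v : V}
    (huv : u ≠ v) (hu : G.degree u = 1) (hv : G.degree v = 1) :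
    cDSO G ≤ √5 + (Fintype.card V - 3) * √2 := by
  classical
  have hconn := hG.preconnected
  obtain ⟨u', hu', -⟩ := degree_eq_one_iff_existsUnique_adj.mp hu
  obtain ⟨v', hv', -⟩ := degree_eq_one_iff_existsUnique_adj.mp hv
  have hne := hconn.pendant_edges_ne hV huv hu hv hu' (v' := v')
  have h₁ : s(u, u') ∈ G.edgeFinset := mem_edgeFinset.mpr hu'
  have h₂ : s(v, v') ∈ G.edgeFinset := mem_edgeFinset.mpr hv'
  have hrest := sum_cdsoEdgeWeight_le (G := G) (s := (G.edgeFinset.erase s(u, u')).erase s(v, v'))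
    ((Finset.erase_subset _ _).trans (Finset.erase_subset _ _))
  rw [hG.cast_card_erase_erase h₁ h₂ hne] at hrest
  rw [cDSO_eq_add_add_sum h₁ h₂ hne]
  linarith [hconn.cdsoEdgeWeight_le_of_degree_eq_one hV hu hu',
    hconn.cdsoEdgeWeight_le_of_degree_eq_one hV hv hv']

theorem IsTree.cDSO_eq_iff_of_adj_of_degree_eq_one [DecidableEq V] (hG : G.IsTree)
    (hV : 3 ≤ Fintype.card V) {u v u' v' : V} (huv : u ≠ v) (hu : G.degree u = 1)
    (hv : G.degree v = 1) (hu' : G.Adj u u') (hv' : G.Adj v v') :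
    cDSO G = √5 + (Fintype.card V - 3) * √2 ↔ G.degree u' = 2 ∧ G.degree v' = 2 ∧
      ∀ e ∈ (G.edgeFinset.erase s(u, u')).erase s(v, v'), G.cdsoEdgeWeight e = √2 := by
  have hconn := hG.preconnected
  have hne := hconn.pendant_edges_ne hV huv hu hv hu' (v' := v')
  have h₁ : s(u, u') ∈ G.edgeFinset := mem_edgeFinset.mpr hu'
  have h₂ : s(v, v') ∈ G.edgeFinset := mem_edgeFinset.mpr hv'
  have hRsub : (G.edgeFinset.erase s(u, u')).erase s(v, v') ⊆ G.edgeFinset :=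
    (Finset.erase_subset _ _).trans (Finset.erase_subset _ _)
  have hrest := sum_cdsoEdgeWeight_le hRsub
  have hu'le := hconn.cdsoEdgeWeight_le_of_degree_eq_one hV hu hu'
  have hv'le := hconn.cdsoEdgeWeight_le_of_degree_eq_one hV hv hv'
  rw [hG.cast_card_erase_erase h₁ h₂ hne] at hrest
  rw [cDSO_eq_add_add_sum h₁ h₂ hne, ← hconn.cdsoEdgeWeight_eq_iff_of_degree_eq_one hV hu hu',
    ← hconn.cdsoEdgeWeight_eq_iff_of_degree_eq_one hV hv hv',
    ← sum_cdsoEdgeWeight_eq_iff hRsub, hG.cast_card_erase_erase h₁ h₂ hne]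
  constructor
  · intro h
    exact ⟨by linarith, by linarith, by linarith⟩
  · rintro ⟨h1, h2, h3⟩
    rw [h1, h2, h3]
    ring

theorem IsTree.cDSO_eq_iff_of_degree_eq_one (hG : G.IsTree) (hV : 3 ≤ Fintype.card V) {u v : V}
    (huv : u ≠ v) (hu : G.degree u = 1) (hv : G.degree v = 1) :
    cDSO G = √5 + (Fintype.card V - 3) * √2 ↔ ∀ w, w ≠ u → w ≠ v → G.degree w = 2 := by
  classical
  have hconn := hG.preconnected
  obtain ⟨u', hu', hu'_unique⟩ := degree_eq_one_iff_existsUnique_adj.mp hu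
  obtain ⟨v', hv', hv'_unique⟩ := degree_eq_one_iff_existsUnique_adj.mp hv
  rw [hG.cDSO_eq_iff_of_adj_of_degree_eq_one hV huv hu hv hu' hv']
  set R := (G.edgeFinset.erase s(u, u')).erase s(v, v') with hR
  constructor
  · rintro ⟨hu'2, hv'2, hRw⟩
    refine fun w hwu hwv ↦ hG.degree_eq_two_of_two_le huv hu hv (fun w hwu hwv ↦ ?_) hwu hwv
    have : Nontrivial V := Fintype.one_lt_card_iff_nontrivial.mp (by omega)
    have hw0 := hconn.degree_pos_of_nontrivial w
    by_contra! hw2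
    have hw1 : G.degree w = 1 := by omega
    obtain ⟨w', hw'⟩ := (G.degree_pos_iff_exists_adj w).mp hw0
    have hmem : s(w, w') ∈ R := by
      simp only [hR, Finset.mem_erase, mem_edgeFinset, mem_edgeSet, ne_eq, Sym2.eq_iff]
      refine ⟨?_, ?_, hw'⟩ <;> rintro (⟨rfl, -⟩ | ⟨rfl, -⟩) <;> first | contradiction | omega
    have hw'1 := ((cdsoEdgeWeight_eq_sqrt_two_iff hw').mp (hRw _ hmem)).symm.trans hw1
    exact hconn.not_adj_of_degree_eq_one hV hw1 hw'1 hw'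
  · intro hdeg
    have hend {x y : V} (hxy : s(x, y) ∈ R) : x ≠ u ∧ x ≠ v := by
      simp only [hR, Finset.mem_erase, mem_edgeFinset, mem_edgeSet, ne_eq, Sym2.eq_iff] at hxy
      obtain ⟨hxv, hxu, hxy⟩ := hxy
      refine ⟨?_, ?_⟩ <;> rintro rfl
      · exact hxu (Or.inl ⟨rfl, hu'_unique y hxy⟩)
      · exact hxv (Or.inl ⟨rfl, hv'_unique y hxy⟩)
    refine ⟨hdeg u' hu'.ne' fun h ↦ hconn.not_adj_of_degree_eq_one hV hu hv (h ▸ hu'),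
      hdeg v' (fun h ↦ hconn.not_adj_of_degree_eq_one hV hv hu (h ▸ hv')) hv'.ne', ?_⟩
    intro e he
    induction e using Sym2.ind with | _ x y
    have hyx : s(y, x) ∈ R := Sym2.eq_swap ▸ he
    have hxy : G.Adj x y := mem_edgeFinset.mp (Finset.mem_of_mem_erase (Finset.mem_of_mem_erase he))
    rw [cdsoEdgeWeight_eq_sqrt_two_iff hxy,
      hdeg x (hend he).1 (hend he).2, hdeg y (hend hyx).1 (hend hyx).2]

theorem IsTree.cDSO_eq_iff (hG : G.IsTree) (hV : 3 ≤ Fintype.card V) :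
    cDSO G = √5 + (Fintype.card V - 3) * √2 ↔ ∃ u v, u ≠ v ∧ G.degree u = 1 ∧
      G.degree v = 1 ∧ ∀ w, w ≠ u → w ≠ v → G.degree w = 2 := by
  constructor
  · intro h
    have : Nontrivial V := Fintype.one_lt_card_iff_nontrivial.mp (by omega)
    obtain ⟨u, v, huv, hu, hv⟩ := hG.exists_ne_and_degree_eq_one
    exact ⟨u, v, huv, hu, hv, (hG.cDSO_eq_iff_of_degree_eq_one hV huv hu hv).mp h⟩
  · rintro ⟨u, v, huv, hu, hv, hdeg⟩
    exact (hG.cDSO_eq_iff_of_degree_eq_one hV huv hu hv).mpr hdeg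

end SimpleGraph

theorem stmt19_general {V : Type*} [Fintype V] (T : SimpleGraph V)
    (n : ℕ) (hn : n = Fintype.card V) (hn4 : 4 ≤ n) (htree : T.IsTree) :
    Real.sqrt (((n : ℝ) - 1) ^ 2 + 1) ≤ cDSO T ∧
    cDSO T ≤ Real.sqrt 5 + ((n : ℝ) - 3) * Real.sqrt 2 ∧
    (cDSO T = Real.sqrt (((n : ℝ) - 1) ^ 2 + 1) ↔
      Nonempty (T ≃g completeBipartiteGraph (Fin 1) (Fin (n - 1)))) ∧
    (cDSO T = Real.sqrt 5 + ((n : ℝ) - 3) * Real.sqrt 2 ↔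
      Nonempty (T ≃g pathGraph n)) := by
  classical
  subst hn
  have : Nontrivial V := Fintype.one_lt_card_iff_nontrivial.mp (by omega)
  obtain ⟨u, v, huv, hu, hv⟩ := htree.exists_ne_and_degree_eq_one
  refine ⟨htree.sqrt_le_cDSO, htree.cDSO_le_of_degree_eq_one (by omega) huv hu hv, ?_, ?_⟩
  · rw [htree.cDSO_eq_sqrt_iff, htree.exists_isUniversal_iff]
  · rw [htree.cDSO_eq_iff (by omega), htree.connected.nonempty_iso_pathGraph_iff (by omega)]

theorem stmt19 {V : Type*} [Fintype V] (T : SimpleGraph V) [DecidableRel T.Adj]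
    (n : ℕ) (hn : n = Fintype.card V) (hn4 : 4 ≤ n) (htree : T.IsTree) :
    Real.sqrt (((n : ℝ) - 1) ^ 2 + 1) ≤ cDSO T ∧
    cDSO T ≤ Real.sqrt 5 + ((n : ℝ) - 3) * Real.sqrt 2 ∧
    (cDSO T = Real.sqrt (((n : ℝ) - 1) ^ 2 + 1) ↔
      Nonempty (T ≃g completeBipartiteGraph (Fin 1) (Fin (n - 1)))) ∧
    (cDSO T = Real.sqrt 5 + ((n : ℝ) - 3) * Real.sqrt 2 ↔
      Nonempty (T ≃g pathGraph n)) :=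
  stmt19_general T n hn hn4 htree
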